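/- arXiv:2310.14144 — 3 statements merged into one kernel-verified Lean document; each statement's English description precedes it below -/
import Mathlib

section
/- Let (A, B, C, D, E, F, K) solve the Riccati ODE system on [0, T]. Then for every t ∈ [0, T] the 2×2 matrix with rows (A_t, B_t) and (B_t, C_t) is positive semidefinite and 0 ≤ C_t ≤ 1/λ_t; moreover B_t + λ_t C_t > 0 for every t ∈ [0, T). -/
open Set MeasureTheory Matrix

/-- Market parameters: time horizon `T > 0` and bounded measurable coefficient functions
`β, λ, ε, θ, σ : [0,T] → ℝ` with `β > 0`, `σ ≥ 0`, `λ` and `ε` positive and bounded away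
from zero, `λ` differentiable with bounded derivative `lam'`, and the no-arbitrage
condition `2β_t + γ̇_t > 0` where `γ = log λ` (so `γ̇ = λ'/λ`). -/
structure Params where
  T : ℝ
  beta : ℝ → ℝ
  lam : ℝ → ℝ
  lam' : ℝ → ℝ
  eps : ℝ → ℝ
  theta : ℝ → ℝ
  sigma : ℝ → ℝ
  hT : 0 < T
  hbeta_meas : Measurable beta
  htheta_meas : Measurable theta
  hsigma_meas : Measurable sigma
  heps_meas : Measurable eps
  hbeta_bdd : ∃ M, ∀ t ∈ Icc 0 T, |beta t| ≤ M
  htheta_bdd : ∃ M, ∀ t ∈ Icc 0 T, |theta t| ≤ M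
  hsigma_bdd : ∃ M, ∀ t ∈ Icc 0 T, |sigma t| ≤ M
  hbeta_pos : ∀ t ∈ Icc 0 T, 0 < beta t
  hsigma_nonneg : ∀ t ∈ Icc 0 T, 0 ≤ sigma t
  heps_lb : ∃ c, 0 < c ∧ ∀ t ∈ Icc 0 T, c ≤ eps t
  heps_ub : ∃ M, ∀ t ∈ Icc 0 T, eps t ≤ M
  hlam_lb : ∃ c, 0 < c ∧ ∀ t ∈ Icc 0 T, c ≤ lam t
  hlam_ub : ∃ M, ∀ t ∈ Icc 0 T, lam t ≤ M
  hlam_deriv : ∀ t, HasDerivAt lam (lam' t) t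
  hlam'_bdd : ∃ M, ∀ t, |lam' t| ≤ M
  hnoarb : ∀ t ∈ Icc 0 T, 0 < 2 * beta t + lam' t / lam t

/-- `γ̇_t = λ'_t / λ_t`, the derivative of `γ = log λ`. -/
noncomputable def gammaDot (P : Params) (t : ℝ) : ℝ := P.lam' t / P.lam t

/-- The backward Riccati ODE system on `[0,T]` with its terminal conditions. -/
def IsRiccatiSol (P : Params) (A B C D E F K : ℝ → ℝ) : Prop :=
  (∀ t ∈ Icc (0:ℝ) P.T,
      HasDerivAt A ((P.eps t)⁻¹ * (A t + P.lam t * B t) ^ 2) t) ∧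
  A P.T = P.lam P.T ∧
  (∀ t ∈ Icc (0:ℝ) P.T,
      HasDerivAt B ((P.eps t)⁻¹ * (A t + P.lam t * B t) * (B t + P.lam t * C t)
        + P.beta t * B t) t) ∧
  B P.T = -1 ∧
  (∀ t ∈ Icc (0:ℝ) P.T,
      HasDerivAt C ((P.eps t)⁻¹ * (B t + P.lam t * C t) ^ 2 + 2 * P.beta t * C t
        - (P.lam t)⁻¹ * (2 * P.beta t + gammaDot P t)) t) ∧
  C P.T = (P.lam P.T)⁻¹ ∧
  (∀ t ∈ Icc (0:ℝ) P.T,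
      HasDerivAt D ((P.eps t)⁻¹ * (A t + P.lam t * B t) * (D t + P.lam t * E t)
        - P.theta t * (A t - D t)) t) ∧
  D P.T = 0 ∧
  (∀ t ∈ Icc (0:ℝ) P.T,
      HasDerivAt E ((P.eps t)⁻¹ * (B t + P.lam t * C t) * (D t + P.lam t * E t)
        - P.theta t * (B t - E t) + P.beta t * E t) t) ∧
  E P.T = 0 ∧
  (∀ t ∈ Icc (0:ℝ) P.T,
      HasDerivAt F ((P.eps t)⁻¹ * (D t + P.lam t * E t) ^ 2
        - 2 * P.theta t * (D t - F t)) t) ∧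
  F P.T = 0 ∧
  (∀ t ∈ Icc (0:ℝ) P.T,
      HasDerivAt K (-(P.sigma t) ^ 2 * (A t - 2 * D t + F t) / 2) t) ∧
  K P.T = 0

/-!
Write `M = [[A, B], [B, C]]`, `ℓ = (1, λ)` and `g = λ⁻¹ (2β + γ̇) > 0`. The equations for
`A, B, C` say `Ṁ = ε⁻¹ (M ℓ)(M ℓ)ᵀ + β (M e₂e₂ᵀ + e₂e₂ᵀ M) - g e₂e₂ᵀ`, so `xᵀ Ṁ x = -g x₂² ≤ 0`
whenever `M x = 0`: running backwards from `M_T = λ_T⁻¹ (λ_T, -1)(λ_T, -1)ᵀ ⪰ 0`, the matrix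
cannot leave the positive semidefinite cone. Since `M_T` is singular, we make the exit
derivative strictly negative by following `M + δ I` with `δ_t = η (1 + T - t)`: at a null vector
the form becomes `ε⁻¹ δ² (x ⬝ ℓ)² - 2βδ x₂² - g x₂² - η |x|²`, which is negative once `η` is small
uniformly in `t` (this is where `ε ≥ ε₀ > 0` and `λ ≤ Λ` enter); then let `η → 0`.

The scalar claims are barrier arguments of the same kind: `u = λ⁻¹ - C` vanishes at `T` and
satisfies `u̇ = 2βu - ε⁻¹ (B + λC)²`, and at a zero of `B + λC` its derivative is affine in
`λC ∈ [0, 1]` and negative at both ends, by `β > 0` and by `2β + γ̇ > 0`.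
-/

open Filter Topology

theorem forall_pos_of_deriv_neg_boundary {ι : Type*} [Finite ι] {f f' : ι → ℝ → ℝ} {a b : ℝ}
    (hf : ∀ i, ContinuousOn (f i) (Icc a b))
    (hf' : ∀ i, ∀ t ∈ Ico a b, HasDerivWithinAt (f i) (f' i t) (Ici t) t)
    (hb : ∀ i, 0 < f i b)
    (hexit : ∀ t ∈ Ico a b, (∀ i, 0 ≤ f i t) → (∃ i, f i t = 0) →
      ∃ i, f i t = 0 ∧ f' i t < 0) :
    ∀ i, ∀ t ∈ Icc a b, 0 < f i t := by
  set S := {t ∈ Icc a b | ∃ i, f i t ≤ 0}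
  have hS : IsCompact S := by
    have : S = ⋃ i, Icc a b ∩ f i ⁻¹' Iic 0 := by ext; simp [S]
    exact isCompact_Icc.of_isClosed_subset
      (this ▸ isClosed_iUnion_of_finite fun i => (hf i).preimage_isClosed_of_isClosed
        isClosed_Icc isClosed_Iic) fun t ht => ht.1
  by_contra! hbad
  obtain ⟨i₀, t₀, ht₀, hi₀⟩ := hbad
  set s := sSup S
  have hsS : s ∈ S := hS.sSup_mem ⟨t₀, ht₀, i₀, hi₀⟩
  have hafter : ∀ t ∈ Ioc s b, ∀ i, 0 < f i t := fun t ht i => by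
    by_contra! hti
    exact (le_csSup hS.bddAbove ⟨⟨hsS.1.1.trans ht.1.le, ht.2⟩, i, hti⟩).not_gt ht.1
  have hsb : s < b := hsS.1.2.lt_of_ne fun hs => by
    obtain ⟨i, hi⟩ := hsS.2
    exact (hb i).not_ge (hs ▸ hi)
  have hs : s ∈ Ico a b := ⟨hsS.1.1, hsb⟩
  have hnonneg : ∀ i, 0 ≤ f i s := fun i => by
    have hlim := ((hf i).continuousWithinAt hsS.1).mono (Ioc_subset_Icc_self.trans
      (Icc_subset_Icc hsS.1.1 le_rfl))
    rw [ContinuousWithinAt, nhdsWithin_Ioc_eq_nhdsGT hsb] at hlim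
    exact ge_of_tendsto hlim
      (mem_of_superset (Ioc_mem_nhdsGT hsb) fun t ht => (hafter t ht i).le)
  obtain ⟨i, hi, hi'⟩ := hexit s hs hnonneg <| by
    obtain ⟨i, hi⟩ := hsS.2
    exact ⟨i, hi.antisymm (hnonneg i)⟩
  obtain ⟨t, hslope, ht⟩ :=
    ((hf' i s hs).liminf_right_slope_le hi').and_eventually (Ioc_mem_nhdsGT hsb) |>.exists
  rw [slope_neg_iff_of_le ht.1.le, hi] at hslope
  exact (hafter t ht i).not_gt hslope

theorem pos_of_deriv_neg_boundary {f f' : ℝ → ℝ} {a b : ℝ}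
    (hf : ∀ t ∈ Icc a b, HasDerivAt f (f' t) t) (hb : 0 < f b)
    (hexit : ∀ t ∈ Ico a b, f t = 0 → f' t < 0) :
    ∀ t ∈ Icc a b, 0 < f t :=
  forall_pos_of_deriv_neg_boundary (ι := Unit) (f := fun _ => f) (f' := fun _ => f')
    (fun _ => HasDerivAt.continuousOn hf)
    (fun _ t ht => (hf t (Ico_subset_Icc_self ht)).hasDerivWithinAt) (fun _ => hb)
    (fun t ht _ ⟨_, h⟩ => ⟨(), h, hexit t ht h⟩) ()

theorem HasDerivAt.eventually_nhdsLT_lt_of_neg {f : ℝ → ℝ} {f' x : ℝ}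
    (hf : HasDerivAt f f' x) (hf' : f' < 0) : ∀ᶠ t in 𝓝[<] x, f x < f t := by
  filter_upwards [hf.hasDerivWithinAt.limsup_slope_le' (lt_irrefl x) hf', self_mem_nhdsWithin]
    with t ht htx
  rwa [slope_comm, slope_neg_iff_of_le (le_of_lt htx)] at ht

theorem Matrix.posSemidef_fin_two_of_sq_le {a b c : ℝ} (ha : 0 ≤ a) (hc : 0 ≤ c)
    (hb : b ^ 2 ≤ a * c) : (!![a, b; b, c] : Matrix (Fin 2) (Fin 2) ℝ).PosSemidef := by
  refine Matrix.posSemidef_iff_dotProduct_mulVec.2 ⟨?_, fun x => ?_⟩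
  · ext i j
    fin_cases i <;> fin_cases j <;> rfl
  · simp only [star_trivial, dotProduct, mulVec, Fin.sum_univ_two, of_apply, cons_val',
      cons_val_zero, cons_val_one, empty_val', cons_val_fin_one]
    rcases ha.eq_or_lt with rfl | ha
    · obtain rfl : b = 0 := by nlinarith
      nlinarith [mul_nonneg hc (sq_nonneg (x 1))]
    · nlinarith [sq_nonneg (a * x 0 + b * x 1), mul_nonneg (sub_nonneg.2 hb) (sq_nonneg (x 1))]

-- `xᵀ (d/dt)(M + δ I) x` for `M = [[a, b], [b, c]]`, `(M + δ I) x = 0` and `δ̇ = -κ`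
theorem riccati_quadForm_neg_of_null {a b c l e β g δ κ x y : ℝ} (he : 0 < e) (hβ : 0 ≤ β)
    (hg : 0 ≤ g) (hδ : 0 ≤ δ) (hsmall : δ ^ 2 * (1 + l ^ 2) < e * κ)
    (hxy : 0 < x ^ 2 + y ^ 2) (h₁ : a * x + b * y = -(δ * x)) (h₂ : b * x + c * y = -(δ * y)) :
    e⁻¹ * ((a + l * b) * x + (b + l * c) * y) ^ 2 + 2 * β * y * (b * x + c * y) - g * y ^ 2
      - κ * (x ^ 2 + y ^ 2) < 0 := by
  have hℓ : (a + l * b) * x + (b + l * c) * y = -(δ * (x + l * y)) := by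
    linear_combination h₁ + l * h₂
  have hcs : (x + l * y) ^ 2 ≤ (1 + l ^ 2) * (x ^ 2 + y ^ 2) := by
    nlinarith [sq_nonneg (l * x - y)]
  have hcoef : e⁻¹ * (δ ^ 2 * (1 + l ^ 2)) < κ := (inv_mul_lt_iff₀ he).2 hsmall
  have hfirst : e⁻¹ * (-(δ * (x + l * y))) ^ 2 < κ * (x ^ 2 + y ^ 2) :=
    calc e⁻¹ * (-(δ * (x + l * y))) ^ 2 = e⁻¹ * δ ^ 2 * (x + l * y) ^ 2 := by ring
      _ ≤ e⁻¹ * δ ^ 2 * ((1 + l ^ 2) * (x ^ 2 + y ^ 2)) := by gcongr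
      _ = e⁻¹ * (δ ^ 2 * (1 + l ^ 2)) * (x ^ 2 + y ^ 2) := by ring
      _ < κ * (x ^ 2 + y ^ 2) := by gcongr
  rw [hℓ, h₂]
  nlinarith [mul_nonneg (mul_nonneg hβ hδ) (sq_nonneg y), mul_nonneg hg (sq_nonneg y)]

theorem riccati_deriv_neg_of_psd_boundary {a b c l e β g δ κ : ℝ} (he : 0 < e) (hβ : 0 ≤ β)
    (hg : 0 ≤ g) (hδ : 0 ≤ δ) (hsmall : δ ^ 2 * (1 + l ^ 2) < e * κ)
    (ha : 0 ≤ a + δ) (hd : b ^ 2 ≤ (a + δ) * (c + δ))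
    (hzero : a + δ = 0 ∨ c + δ = 0 ∨ (a + δ) * (c + δ) - b ^ 2 = 0) :
    a + δ = 0 ∧ e⁻¹ * (a + l * b) ^ 2 - κ < 0 ∨
    c + δ = 0 ∧ e⁻¹ * (b + l * c) ^ 2 + 2 * β * c - g - κ < 0 ∨
    (a + δ) * (c + δ) - b ^ 2 = 0 ∧
      (e⁻¹ * (a + l * b) ^ 2 - κ) * (c + δ)
        + (a + δ) * (e⁻¹ * (b + l * c) ^ 2 + 2 * β * c - g - κ)
        - 2 * b * (e⁻¹ * (a + l * b) * (b + l * c) + β * b) < 0 := by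
  by_cases ha0 : a + δ = 0
  · obtain rfl : b = 0 := by
      rw [ha0, zero_mul] at hd
      nlinarith
    have := riccati_quadForm_neg_of_null (a := a) (b := 0) (c := c) (x := 1) (y := 0)
      he hβ hg hδ hsmall (by norm_num) (by linear_combination ha0) (by ring)
    exact Or.inl ⟨ha0, by linear_combination this⟩
  by_cases hc0 : c + δ = 0
  · obtain rfl : b = 0 := by
      rw [hc0, mul_zero] at hd
      nlinarith
    have := riccati_quadForm_neg_of_null (a := a) (b := 0) (c := c) (x := 0) (y := 1)
      he hβ hg hδ hsmall (by norm_num) (by ring) (by linear_combination hc0)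
    exact Or.inr (Or.inl ⟨hc0, by linear_combination this⟩)
  have hd0 := (hzero.resolve_left ha0).resolve_left hc0
  have ha' : 0 < a + δ := lt_of_le_of_ne ha (Ne.symm ha0)
  -- the null vector is `x = (-b, a + δ)`, and there `(a + δ) D' = xᵀ (d/dt)(M + δ I) x`
  have := riccati_quadForm_neg_of_null (a := a) (b := b) (c := c) (x := -b) (y := a + δ)
    he hβ hg hδ hsmall (by positivity) (by ring) (by linear_combination hd0)
  refine Or.inr (Or.inr ⟨hd0, neg_of_mul_neg_right ?_ ha'.le⟩)
  linear_combination this + (e⁻¹ * (a + l * b) ^ 2 - κ) * hd0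

namespace Params

variable (P : Params)

theorem lam_pos : ∀ t ∈ Icc (0:ℝ) P.T, 0 < P.lam t := by
  obtain ⟨c, hc, h⟩ := P.hlam_lb
  exact fun t ht => hc.trans_le (h t ht)

theorem eps_pos : ∀ t ∈ Icc (0:ℝ) P.T, 0 < P.eps t := by
  obtain ⟨c, hc, h⟩ := P.heps_lb
  exact fun t ht => hc.trans_le (h t ht)

theorem exists_perturbation_lt :
    ∃ η₀ > 0, ∀ η ∈ Ioo 0 η₀, ∀ t ∈ Icc (0:ℝ) P.T,
      (η * (1 + P.T - t)) ^ 2 * (1 + P.lam t ^ 2) < P.eps t * η := by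
  obtain ⟨ε₀, hε₀, hε⟩ := P.heps_lb
  obtain ⟨Λ, hΛ⟩ := P.hlam_ub
  have hT : 0 < 1 + P.T := by linarith [P.hT]
  refine ⟨ε₀ / ((1 + P.T) ^ 2 * (1 + Λ ^ 2)), by positivity, fun η hη t ht => ?_⟩
  have hη0 : 0 < η := hη.1
  have hlam : P.lam t ^ 2 ≤ Λ ^ 2 := pow_le_pow_left₀ (P.lam_pos t ht).le (hΛ t ht) 2
  have htime : (1 + P.T - t) ^ 2 ≤ (1 + P.T) ^ 2 :=
    pow_le_pow_left₀ (by linarith [ht.2]) (by linarith [ht.1]) 2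
  have hsmall : η * (1 + P.T) ^ 2 * (1 + Λ ^ 2) < ε₀ :=
    (lt_div_iff₀ (by positivity)).1 hη.2 |>.trans_eq' (by ring)
  calc (η * (1 + P.T - t)) ^ 2 * (1 + P.lam t ^ 2)
      = (η * (1 + P.T - t) ^ 2 * (1 + P.lam t ^ 2)) * η := by ring
    _ ≤ (η * (1 + P.T) ^ 2 * (1 + Λ ^ 2)) * η := by gcongr
    _ < ε₀ * η := by gcongr
    _ ≤ P.eps t * η := by gcongr; exact hε t ht

end Params

structure IsRiccatiABC (P : Params) (A B C : ℝ → ℝ) : Prop where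
  hasDerivAt_A : ∀ t ∈ Icc (0:ℝ) P.T,
    HasDerivAt A ((P.eps t)⁻¹ * (A t + P.lam t * B t) ^ 2) t
  A_T : A P.T = P.lam P.T
  hasDerivAt_B : ∀ t ∈ Icc (0:ℝ) P.T,
    HasDerivAt B ((P.eps t)⁻¹ * (A t + P.lam t * B t) * (B t + P.lam t * C t)
      + P.beta t * B t) t
  B_T : B P.T = -1
  hasDerivAt_C : ∀ t ∈ Icc (0:ℝ) P.T,
    HasDerivAt C ((P.eps t)⁻¹ * (B t + P.lam t * C t) ^ 2 + 2 * P.beta t * C t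
      - (P.lam t)⁻¹ * (2 * P.beta t + gammaDot P t)) t
  C_T : C P.T = (P.lam P.T)⁻¹

theorem IsRiccatiSol.isRiccatiABC {P : Params} {A B C D E F K : ℝ → ℝ}
    (h : IsRiccatiSol P A B C D E F K) : IsRiccatiABC P A B C :=
  ⟨h.1, h.2.1, h.2.2.1, h.2.2.2.1, h.2.2.2.2.1, h.2.2.2.2.2.1⟩

namespace IsRiccatiABC

variable {P : Params} {A B C : ℝ → ℝ}

theorem C_le_inv_lam (h : IsRiccatiABC P A B C) :
    ∀ t ∈ Icc (0:ℝ) P.T, C t ≤ (P.lam t)⁻¹ := by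
  set u := fun t => (P.lam t)⁻¹ - C t
  have hu : ∀ t ∈ Icc (0:ℝ) P.T, HasDerivAt u
      (2 * P.beta t * u t - (P.eps t)⁻¹ * (B t + P.lam t * C t) ^ 2) t := fun t ht => by
    refine (((P.hlam_deriv t).inv (P.lam_pos t ht).ne').sub (h.hasDerivAt_C t ht)).congr_deriv ?_
    simp only [u, gammaDot]
    field_simp
    ring
  intro t ht
  rw [← sub_nonneg]
  refine le_of_forall_lt fun c hc => sub_pos.1 ?_
  refine pos_of_deriv_neg_boundary (fun s hs => (hu s hs).sub_const c) ?_ ?_ t ht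
  · simp [u, h.C_T, hc]
  · intro s hs hus
    have hβ := P.hbeta_pos s (Ico_subset_Icc_self hs)
    have hε := P.eps_pos s (Ico_subset_Icc_self hs)
    rw [show u s = c by linarith]
    nlinarith [mul_neg_of_pos_of_neg hβ hc,
      mul_nonneg (inv_pos.2 hε).le (sq_nonneg (B s + P.lam s * C s))]

theorem perturbed_pos (h : IsRiccatiABC P A B C) {η : ℝ} (hη : 0 < η)
    (hsmall : ∀ t ∈ Icc (0:ℝ) P.T, (η * (1 + P.T - t)) ^ 2 * (1 + P.lam t ^ 2) < P.eps t * η) :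
    ∀ t ∈ Icc (0:ℝ) P.T, 0 < A t + η * (1 + P.T - t) ∧ 0 < C t + η * (1 + P.T - t) ∧
      0 < (A t + η * (1 + P.T - t)) * (C t + η * (1 + P.T - t)) - B t ^ 2 := by
  set δ : ℝ → ℝ := fun t => η * (1 + P.T - t)
  have hδ : ∀ t, HasDerivAt δ (-η) t := fun t => by
    simpa using ((hasDerivAt_id t).const_sub (1 + P.T)).const_mul η
  set A' := fun t => (P.eps t)⁻¹ * (A t + P.lam t * B t) ^ 2 - η
  set B' := fun t =>
    (P.eps t)⁻¹ * (A t + P.lam t * B t) * (B t + P.lam t * C t) + P.beta t * B t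
  set C' := fun t => (P.eps t)⁻¹ * (B t + P.lam t * C t) ^ 2 + 2 * P.beta t * C t
    - (P.lam t)⁻¹ * (2 * P.beta t + gammaDot P t) - η
  have hA' : ∀ t ∈ Icc (0:ℝ) P.T, HasDerivAt (fun t => A t + δ t) (A' t) t := fun t ht =>
    ((h.hasDerivAt_A t ht).add (hδ t)).congr_deriv (sub_eq_add_neg _ _).symm
  have hC' : ∀ t ∈ Icc (0:ℝ) P.T, HasDerivAt (fun t => C t + δ t) (C' t) t := fun t ht =>
    ((h.hasDerivAt_C t ht).add (hδ t)).congr_deriv (sub_eq_add_neg _ _).symm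
  have hD' : ∀ t ∈ Icc (0:ℝ) P.T, HasDerivAt (fun t => (A t + δ t) * (C t + δ t) - B t ^ 2)
      (A' t * (C t + δ t) + (A t + δ t) * C' t - 2 * B t * B' t) t := fun t ht =>
    (((hA' t ht).mul (hC' t ht)).sub ((h.hasDerivAt_B t ht).pow 2)).congr_deriv (by ring)
  set f : Fin 3 → ℝ → ℝ :=
    ![fun t => A t + δ t, fun t => C t + δ t, fun t => (A t + δ t) * (C t + δ t) - B t ^ 2]
  set f' : Fin 3 → ℝ → ℝ :=
    ![A', C', fun t => A' t * (C t + δ t) + (A t + δ t) * C' t - 2 * B t * B' t]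
  have hf : ∀ i, ∀ t ∈ Icc (0:ℝ) P.T, HasDerivAt (f i) (f' i t) t := fun i => by
    fin_cases i
    exacts [hA', hC', hD']
  have key := forall_pos_of_deriv_neg_boundary (fun i => HasDerivAt.continuousOn (hf i))
    (fun i t ht => (hf i t (Ico_subset_Icc_self ht)).hasDerivWithinAt) ?_ ?_
  · exact fun t ht => ⟨key 0 t ht, key 1 t ht, key 2 t ht⟩
  · have hlam := P.lam_pos P.T (right_mem_Icc.2 P.hT.le)
    have hδT : δ P.T = η := by simp only [δ, add_sub_cancel_right, mul_one]
    intro i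
    fin_cases i <;> simp only [f, Fin.isValue, Fin.reduceFinMk, cons_val, cons_val_zero,
      cons_val_one, hδT, h.A_T, h.B_T, h.C_T]
    · exact add_pos hlam hη
    · exact add_pos (inv_pos.2 hlam) hη
    · nlinarith [mul_inv_cancel₀ hlam.ne', mul_pos hη hlam, mul_pos hη (inv_pos.2 hlam)]
  · intro t ht hnonneg hzero
    simp only [f, f', Fin.forall_fin_succ, Fin.exists_fin_succ, Fin.isValue, cons_val_zero,
      cons_val_succ, cons_val_fin_one, sub_nonneg, forall_const, exists_const] at hnonneg hzero ⊢
    obtain ⟨hA0, -, hD0⟩ := hnonneg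
    have hIcc := Ico_subset_Icc_self ht
    have hg : 0 ≤ (P.lam t)⁻¹ * (2 * P.beta t + gammaDot P t) :=
      mul_nonneg (inv_nonneg.2 (P.lam_pos t hIcc).le) (P.hnoarb t hIcc).le
    have hδ0 : 0 ≤ δ t := mul_nonneg hη.le (by linarith [ht.2])
    exact riccati_deriv_neg_of_psd_boundary (P.eps_pos t hIcc) (P.hbeta_pos t hIcc).le hg hδ0
      (hsmall t hIcc) hA0 hD0 hzero

theorem A_nonneg_and_C_nonneg_and_sq_le (h : IsRiccatiABC P A B C) :
    ∀ t ∈ Icc (0:ℝ) P.T, 0 ≤ A t ∧ 0 ≤ C t ∧ B t ^ 2 ≤ A t * C t := by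
  obtain ⟨η₀, hη₀, hsmall⟩ := P.exists_perturbation_lt
  intro t ht
  have hpert := fun η (hη : η ∈ Ioo 0 η₀) => h.perturbed_pos hη.1 (hsmall η hη) t ht
  have hlim (p : ℝ → ℝ) (hp : Continuous p) (hpos : ∀ η ∈ Ioo 0 η₀, 0 < p η) : 0 ≤ p 0 :=
    ge_of_tendsto (hp.tendsto 0 |>.mono_left nhdsWithin_le_nhds)
      (mem_of_superset (Ioo_mem_nhdsGT hη₀) fun η hη => (hpos η hη).le)
  refine ⟨?_, ?_, ?_⟩
  · simpa using hlim (fun η => A t + η * (1 + P.T - t)) (by fun_prop) (hpert · · |>.1)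
  · simpa using hlim (fun η => C t + η * (1 + P.T - t)) (by fun_prop) (hpert · · |>.2.1)
  · simpa using hlim (fun η => (A t + η * (1 + P.T - t)) * (C t + η * (1 + P.T - t)) - B t ^ 2)
      (by fun_prop) (hpert · · |>.2.2)

theorem B_add_lam_mul_C_pos (h : IsRiccatiABC P A B C) :
    ∀ t ∈ Ico (0:ℝ) P.T, 0 < B t + P.lam t * C t := by
  have hb : ∀ t ∈ Icc (0:ℝ) P.T, HasDerivAt (fun t => B t + P.lam t * C t)
      ((P.eps t)⁻¹ * (A t + P.lam t * B t) * (B t + P.lam t * C t) + P.beta t * B t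
        + (P.lam' t * C t + P.lam t * ((P.eps t)⁻¹ * (B t + P.lam t * C t) ^ 2
          + 2 * P.beta t * C t - (P.lam t)⁻¹ * (2 * P.beta t + gammaDot P t)))) t :=
    fun t ht => (h.hasDerivAt_B t ht).add ((P.hlam_deriv t).mul (h.hasDerivAt_C t ht))
  have hexit : ∀ t ∈ Icc (0:ℝ) P.T, B t + P.lam t * C t = 0 →
      (P.eps t)⁻¹ * (A t + P.lam t * B t) * (B t + P.lam t * C t) + P.beta t * B t
        + (P.lam' t * C t + P.lam t * ((P.eps t)⁻¹ * (B t + P.lam t * C t) ^ 2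
          + 2 * P.beta t * C t - (P.lam t)⁻¹ * (2 * P.beta t + gammaDot P t))) < 0 := by
    intro t ht hbt
    have hlam := P.lam_pos t ht
    set κ := P.lam t * C t
    have hκ0 : 0 ≤ κ := mul_nonneg hlam.le (h.A_nonneg_and_C_nonneg_and_sq_le t ht).2.1
    have hκ1 : κ ≤ 1 := (mul_le_mul_of_nonneg_left (h.C_le_inv_lam t ht) hlam.le).trans_eq
      (mul_inv_cancel₀ hlam.ne')
    have hX := P.hnoarb t ht
    have hβ := P.hbeta_pos t ht
    calc _ = -((1 - κ) * (2 * P.beta t + gammaDot P t)) - κ * P.beta t := by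
          simp only [κ, gammaDot]
          linear_combination ((P.eps t)⁻¹ * (A t + P.lam t * B t) + P.lam t * (P.eps t)⁻¹ *
            (B t + P.lam t * C t) + P.beta t) * hbt
            - (2 * P.beta t + P.lam' t / P.lam t + P.lam' t * C t) * mul_inv_cancel₀ hlam.ne'
      _ < 0 := by
        unfold gammaDot
        rcases le_total (P.beta t) (2 * P.beta t + P.lam' t / P.lam t) with hle | hle
        · nlinarith [mul_le_mul_of_nonneg_left hκ1 (sub_nonneg.2 hle)]
        · nlinarith [mul_le_mul_of_nonneg_left hκ0 (sub_nonneg.2 hle)]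
  intro t ht
  have hT := right_mem_Icc.2 P.hT.le
  have hbT : B P.T + P.lam P.T * C P.T = 0 := by
    rw [h.B_T, h.C_T, mul_inv_cancel₀ (P.lam_pos _ hT).ne']
    ring
  obtain ⟨s, hs, hts⟩ : ∃ s, 0 < B s + P.lam s * C s ∧ s ∈ Ioo t P.T := by
    have := (hb P.T hT).eventually_nhdsLT_lt_of_neg (hexit P.T hT hbT)
    rw [hbT] at this
    exact (this.and (Ioo_mem_nhdsLT ht.2)).exists
  have hsub : Icc 0 s ⊆ Icc 0 P.T := Icc_subset_Icc_right hts.2.le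
  exact pos_of_deriv_neg_boundary (fun r hr => hb r (hsub hr)) hs
    (fun r hr => hexit r (hsub (Ico_subset_Icc_self hr))) t ⟨ht.1, hts.1.le⟩

end IsRiccatiABC

/-- For every `t ∈ [0,T]` the matrix `[[A_t, B_t], [B_t, C_t]]` is
positive semidefinite and `0 ≤ C_t ≤ 1/λ_t`; moreover `B_t + λ_t C_t > 0` on `[0,T)`. -/
theorem riccati_psd (P : Params) (A B C D E F K : ℝ → ℝ)
    (hsol : IsRiccatiSol P A B C D E F K) :
    (∀ t ∈ Icc (0:ℝ) P.T,
        (!![A t, B t; B t, C t] : Matrix (Fin 2) (Fin 2) ℝ).PosSemidef ∧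
        0 ≤ C t ∧ C t ≤ (P.lam t)⁻¹) ∧
    (∀ t ∈ Ico (0:ℝ) P.T, 0 < B t + P.lam t * C t) := by
  have h := hsol.isRiccatiABC
  refine ⟨fun t ht => ?_, h.B_add_lam_mul_C_pos⟩
  obtain ⟨hA, hC, hAC⟩ := h.A_nonneg_and_C_nonneg_and_sq_le t ht
  exact ⟨Matrix.posSemidef_fin_two_of_sq_le hA hC hAC, hC, h.C_le_inv_lam t ht⟩
end

section
/- Assume β_t + γ̇_t > 0 for all t ∈ [0, T]. Let θ̃ : [0, T] → ℝ be measurable and bounded, and let (D̃, Ẽ) be defined by the same ODEs as (D, E) in the Riccati system but with θ̃ in place of θ (and the same A, B, C), with terminal conditions D̃_T = Ẽ_T = 0. If θ_t ≥ θ̃_t for all t ∈ [0, T], then D_t + λ_t E_t ≥ D̃_t + λ_t Ẽ_t and E_t ≤ Ẽ_t for all t ∈ [0, T]. In particular, if θ_t ≥ 0 for all t ∈ [0, T], then D_t + λ_t E_t ≥ 0 and E_t ≤ 0 for all t ∈ [0, T]. -/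
open Set MeasureTheory Matrix

/-- The `(D, E)` subsystem of the Riccati system, with a general mean-reversion
function `th` in place of `θ` (and the same `A, B, C`). -/
def IsDESol (P : Params) (th : ℝ → ℝ) (A B C Dt Et : ℝ → ℝ) : Prop :=
  (∀ t ∈ Icc (0:ℝ) P.T,
      HasDerivAt Dt ((P.eps t)⁻¹ * (A t + P.lam t * B t) * (Dt t + P.lam t * Et t)
        - th t * (A t - Dt t)) t) ∧
  Dt P.T = 0 ∧
  (∀ t ∈ Icc (0:ℝ) P.T,
      HasDerivAt Et ((P.eps t)⁻¹ * (B t + P.lam t * C t) * (Dt t + P.lam t * Et t)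
        - th t * (B t - Et t) + P.beta t * Et t) t) ∧
  Et P.T = 0

/-!
Each inequality says that a pair of quantities solving a backward linear system with
nonpositive off-diagonal coefficients and nonpositive forcing stays nonnegative. Such
cooperative systems keep the nonnegative quadrant invariant backwards in time: after adding
`δ e^{M (T - t)}` with `M` large the boundary of the quadrant becomes strictly repelling, and at
the last time the perturbed pair touches it a one-sided derivative gives a contradiction. Only
lower bounds on the (possibly discontinuous) coefficients enter. This is applied in turn to
`1 - λC`, to `B + λC`, to `(A + λB - (D̃ + λẼ), Ẽ - B)` and to `(D + λE - (D̃ + λẼ), Ẽ - E)`;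
the third step uses that `(A, B)` solves the `(D, E)` equations for every `θ`, and the special
case `θ̃ = 0` compares with the zero solution.
-/

open Filter Topology

theorem HasDerivWithinAt.nonneg_of_eventually_le_right {f : ℝ → ℝ} {f' x : ℝ}
    (hf : HasDerivWithinAt f f' (Ioi x) x) (hmin : ∀ᶠ z in 𝓝[>] x, f x ≤ f z) : 0 ≤ f' := by
  by_contra! hneg
  obtain ⟨z, hslope, hz, hfz⟩ :=
    ((hf.limsup_slope_le' (lt_irrefl x) hneg).and (eventually_mem_nhdsWithin.and hmin)).exists
  rw [slope_def_field] at hslope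
  exact hslope.not_ge (div_nonneg (sub_nonneg.2 hfz) (sub_nonneg.2 (le_of_lt hz)))

theorem pos_of_hasDerivAt_neg_of_eq_zero {a b : ℝ} {F G F' G' : ℝ → ℝ}
    (hF : ∀ t ∈ Icc a b, HasDerivAt F (F' t) t) (hG : ∀ t ∈ Icc a b, HasDerivAt G (G' t) t)
    (hFb : 0 < F b) (hGb : 0 < G b)
    (hF' : ∀ t ∈ Icc a b, F t = 0 → 0 ≤ G t → F' t < 0)
    (hG' : ∀ t ∈ Icc a b, G t = 0 → 0 ≤ F t → G' t < 0) :
    ∀ t ∈ Icc a b, 0 < F t ∧ 0 < G t := by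
  suffices ∀ t ∈ Icc a b, 0 < min (F t) (G t) from fun t ht => lt_min_iff.1 (this t ht)
  by_contra! ⟨s₀, hs₀, hs₀S⟩
  have hcont : ContinuousOn (fun t => min (F t) (G t)) (Icc s₀ b) := fun t ht =>
    ((hF t ⟨hs₀.1.trans ht.1, ht.2⟩).continuousAt.inf
      (hG t ⟨hs₀.1.trans ht.1, ht.2⟩).continuousAt).continuousWithinAt
  set S := Icc s₀ b ∩ (fun t => min (F t) (G t)) ⁻¹' Iic 0
  have hS_bdd : BddAbove S := bddAbove_Icc.mono inter_subset_left
  have ht₁S : sSup S ∈ S :=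
    (hcont.preimage_isClosed_of_isClosed isClosed_Icc isClosed_Iic).csSup_mem
      ⟨s₀, ⟨le_rfl, hs₀.2⟩, hs₀S⟩ hS_bdd
  set t₁ := sSup S
  have ht₁ : t₁ ∈ Icc a b := ⟨hs₀.1.trans ht₁S.1.1, ht₁S.1.2⟩
  have ht₁b : t₁ < b := lt_of_le_of_ne ht₁S.1.2 fun h => (lt_min hFb hGb).not_ge (h ▸ ht₁S.2)
  have hright : ∀ᶠ u in 𝓝[>] t₁, 0 < F u ∧ 0 < G u :=
    mem_of_superset (Ioc_mem_nhdsGT ht₁b) fun u hu => lt_min_iff.1 <| not_le.1 fun h =>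
      hu.1.not_ge (le_csSup hS_bdd ⟨⟨ht₁S.1.1.trans hu.1.le, hu.2⟩, h⟩)
  have hF₁ : 0 ≤ F t₁ := ge_of_tendsto ((hF t₁ ht₁).continuousAt.tendsto.mono_left
    nhdsWithin_le_nhds) (hright.mono fun u hu => hu.1.le)
  have hG₁ : 0 ≤ G t₁ := ge_of_tendsto ((hG t₁ ht₁).continuousAt.tendsto.mono_left
    nhdsWithin_le_nhds) (hright.mono fun u hu => hu.2.le)
  rcases min_le_iff.1 (show min (F t₁) (G t₁) ≤ 0 from ht₁S.2) with h | h
  · have h0 : F t₁ = 0 := le_antisymm h hF₁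
    exact (hF' t₁ ht₁ h0 hG₁).not_ge ((hF t₁ ht₁).hasDerivWithinAt.nonneg_of_eventually_le_right
      (hright.mono fun u hu => h0 ▸ hu.1.le))
  · have h0 : G t₁ = 0 := le_antisymm h hG₁
    exact (hG' t₁ ht₁ h0 hF₁).not_ge ((hG t₁ ht₁).hasDerivWithinAt.nonneg_of_eventually_le_right
      (hright.mono fun u hu => h0 ▸ hu.2.le))

theorem pos_add_exp_of_hasDerivAt_le_cooperative {a b L δ : ℝ} {f g f' g' p q r s : ℝ → ℝ}
    (hf : ∀ t ∈ Icc a b, HasDerivAt f (f' t) t) (hg : ∀ t ∈ Icc a b, HasDerivAt g (g' t) t)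
    (hf' : ∀ t ∈ Icc a b, f' t ≤ p t * f t + q t * g t)
    (hg' : ∀ t ∈ Icc a b, g' t ≤ r t * f t + s t * g t)
    (hq : ∀ t ∈ Icc a b, q t ≤ 0) (hr : ∀ t ∈ Icc a b, r t ≤ 0)
    (hLp : ∀ t ∈ Icc a b, L ≤ p t) (hLq : ∀ t ∈ Icc a b, L ≤ q t)
    (hLr : ∀ t ∈ Icc a b, L ≤ r t) (hLs : ∀ t ∈ Icc a b, L ≤ s t)
    (hfb : 0 ≤ f b) (hgb : 0 ≤ g b) (hδ : 0 < δ) :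
    ∀ t ∈ Icc a b, 0 < f t + δ * Real.exp ((1 - 2 * L) * (b - t)) ∧
      0 < g t + δ * Real.exp ((1 - 2 * L) * (b - t)) := by
  have hcross : ∀ {x y x' c d m : ℝ}, x' ≤ c * x + d * y → L ≤ c → L ≤ d → d ≤ 0 →
      x + m = 0 → 0 ≤ y + m → 0 < m → x' - (1 - 2 * L) * m < 0 := by
    intro x y x' c d m h hc hd hd0 hx hy hm
    nlinarith [mul_nonneg (sub_nonneg.2 hc) hm.le, mul_nonpos_of_nonpos_of_nonneg hd0 hy,
      mul_nonneg (sub_nonneg.2 hd) hm.le]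
  set e : ℝ → ℝ := fun t => δ * Real.exp ((1 - 2 * L) * (b - t))
  have he : ∀ t, HasDerivAt e (-((1 - 2 * L) * e t)) t := fun t =>
    ((((hasDerivAt_id' t).const_sub b).const_mul (1 - 2 * L)).exp.const_mul δ).congr_deriv
      (by simp only [e]; ring)
  have he_pos : ∀ t, 0 < e t := fun t => mul_pos hδ (Real.exp_pos _)
  have heb : e b = δ := by simp only [e, sub_self, mul_zero, Real.exp_zero, mul_one]
  refine pos_of_hasDerivAt_neg_of_eq_zero (fun t ht => (hf t ht).add (he t))
    (fun t ht => (hg t ht).add (he t)) (by linarith) (by linarith) ?_ ?_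
  · intro t ht hF hG
    exact hcross (hf' t ht) (hLp t ht) (hLq t ht) (hq t ht) hF hG (he_pos t)
  · intro t ht hG hF
    have := hcross (x := g t) (y := f t) (x' := g' t) (c := s t) (d := r t)
      (by linarith [hg' t ht]) (hLs t ht) (hLr t ht) (hr t ht) hG hF (he_pos t)
    linarith

theorem nonneg_of_hasDerivAt_le_cooperative {a b : ℝ} {f g f' g' p q r s : ℝ → ℝ}
    (hf : ∀ t ∈ Icc a b, HasDerivAt f (f' t) t) (hg : ∀ t ∈ Icc a b, HasDerivAt g (g' t) t)
    (hf' : ∀ t ∈ Icc a b, f' t ≤ p t * f t + q t * g t)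
    (hg' : ∀ t ∈ Icc a b, g' t ≤ r t * f t + s t * g t)
    (hq : ∀ t ∈ Icc a b, q t ≤ 0) (hr : ∀ t ∈ Icc a b, r t ≤ 0)
    (hp_bdd : BddBelow (p '' Icc a b)) (hq_bdd : BddBelow (q '' Icc a b))
    (hr_bdd : BddBelow (r '' Icc a b)) (hs_bdd : BddBelow (s '' Icc a b))
    (hfb : 0 ≤ f b) (hgb : 0 ≤ g b) :
    ∀ t ∈ Icc a b, 0 ≤ f t ∧ 0 ≤ g t := by
  obtain ⟨L, hL⟩ := ((hp_bdd.union hq_bdd).union hr_bdd).union hs_bdd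
  have hpert := fun δ (hδ : 0 < δ) => pos_add_exp_of_hasDerivAt_le_cooperative hf hg hf' hg' hq hr
    (fun t ht => hL (Or.inl (Or.inl (Or.inl (mem_image_of_mem p ht)))))
    (fun t ht => hL (Or.inl (Or.inl (Or.inr (mem_image_of_mem q ht)))))
    (fun t ht => hL (Or.inl (Or.inr (mem_image_of_mem r ht))))
    (fun t ht => hL (Or.inr (mem_image_of_mem s ht))) hfb hgb hδ
  intro t ht
  have hE := Real.exp_pos ((1 - 2 * L) * (b - t))
  have hδ : ∀ ε, ε / Real.exp ((1 - 2 * L) * (b - t)) * Real.exp ((1 - 2 * L) * (b - t)) = ε :=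
    fun ε => div_mul_cancel₀ ε hE.ne'
  constructor <;> refine le_of_forall_pos_lt_add fun ε hε => ?_
  · simpa [hδ ε] using (hpert _ (div_pos hε hE) t ht).1
  · simpa [hδ ε] using (hpert _ (div_pos hε hE) t ht).2

theorem nonneg_of_hasDerivAt_le_mul {a b : ℝ} {f f' p : ℝ → ℝ}
    (hf : ∀ t ∈ Icc a b, HasDerivAt f (f' t) t) (hf' : ∀ t ∈ Icc a b, f' t ≤ p t * f t)
    (hp_bdd : BddBelow (p '' Icc a b)) (hfb : 0 ≤ f b) : ∀ t ∈ Icc a b, 0 ≤ f t := by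
  have h0 : BddBelow ((fun _ => (0 : ℝ)) '' Icc a b) := ⟨0, by rintro _ ⟨_, _, rfl⟩; exact le_rfl⟩
  exact fun t ht => (nonneg_of_hasDerivAt_le_cooperative (q := fun _ => 0) (r := fun _ => 0)
    (s := p) hf hf (by simpa using hf') (by simpa using hf') (fun _ _ => le_rfl)
    (fun _ _ => le_rfl) hp_bdd h0 h0 hp_bdd hfb hfb t ht).1

theorem boundedAtFilter_principal_iff {α : Type*} {s : Set α} {f : α → ℝ} :
    BoundedAtFilter (𝓟 s) f ↔ ∃ M, ∀ x ∈ s, |f x| ≤ M := by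
  simp [BoundedAtFilter, Asymptotics.isBigO_principal]

theorem BoundedAtFilter.bddBelow_image {α : Type*} {s : Set α} {f : α → ℝ}
    (h : BoundedAtFilter (𝓟 s) f) : BddBelow (f '' s) := by
  obtain ⟨M, hM⟩ := boundedAtFilter_principal_iff.1 h
  exact ⟨-M, forall_mem_image.2 fun x hx => neg_le_of_abs_le (hM x hx)⟩

theorem boundedAtFilter_of_hasDerivAt {a b : ℝ} {f f' : ℝ → ℝ}
    (hf : ∀ t ∈ Icc a b, HasDerivAt f (f' t) t) : BoundedAtFilter (𝓟 (Icc a b)) f :=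
  ContinuousOn.isBigO_principal (fun t ht => (hf t ht).continuousAt.continuousWithinAt)
    isCompact_Icc (by norm_num : ‖(1 : ℝ)‖ ≠ 0)

namespace Params

variable (P : Params)

theorem eps_inv_pos : ∀ t ∈ Icc (0:ℝ) P.T, 0 < (P.eps t)⁻¹ :=
  let ⟨_, hc, hlb⟩ := P.heps_lb; fun t ht => inv_pos.2 (hc.trans_le (hlb t ht))

theorem boundedAtFilter_eps_inv : BoundedAtFilter (𝓟 (Icc 0 P.T)) fun t => (P.eps t)⁻¹ := by
  obtain ⟨c, hc, hlb⟩ := P.heps_lb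
  refine boundedAtFilter_principal_iff.2 ⟨c⁻¹, fun t ht => ?_⟩
  rw [abs_of_pos (P.eps_inv_pos t ht)]
  exact inv_anti₀ hc (hlb t ht)

theorem boundedAtFilter_lam : BoundedAtFilter (𝓟 (Icc 0 P.T)) P.lam :=
  boundedAtFilter_of_hasDerivAt fun t _ => P.hlam_deriv t

theorem boundedAtFilter_lam' : BoundedAtFilter (𝓟 (Icc 0 P.T)) P.lam' :=
  let ⟨M, hM⟩ := P.hlam'_bdd; boundedAtFilter_principal_iff.2 ⟨M, fun t _ => hM t⟩

theorem gammaDot_mul_lam {t : ℝ} (ht : t ∈ Icc (0:ℝ) P.T) : gammaDot P t * P.lam t = P.lam' t :=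
  div_mul_cancel₀ _ (P.lam_pos t ht).ne'

theorem lam'_add_beta_mul_lam_nonneg (hstrong : ∀ t ∈ Icc (0:ℝ) P.T, 0 < P.beta t + gammaDot P t) :
    ∀ t ∈ Icc (0:ℝ) P.T, 0 ≤ P.lam' t + P.beta t * P.lam t := fun t ht => by
  linear_combination (mul_pos (P.lam_pos t ht) (hstrong t ht)).le + P.gammaDot_mul_lam ht

end Params

structure IsABCSol (P : Params) (A B C : ℝ → ℝ) : Prop where
  hasDerivAt_A : ∀ t ∈ Icc (0:ℝ) P.T,
    HasDerivAt A ((P.eps t)⁻¹ * (A t + P.lam t * B t) ^ 2) t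
  A_T : A P.T = P.lam P.T
  hasDerivAt_B : ∀ t ∈ Icc (0:ℝ) P.T,
    HasDerivAt B ((P.eps t)⁻¹ * (A t + P.lam t * B t) * (B t + P.lam t * C t) + P.beta t * B t) t
  B_T : B P.T = -1
  hasDerivAt_C : ∀ t ∈ Icc (0:ℝ) P.T,
    HasDerivAt C ((P.eps t)⁻¹ * (B t + P.lam t * C t) ^ 2 + 2 * P.beta t * C t
      - (P.lam t)⁻¹ * (2 * P.beta t + gammaDot P t)) t
  C_T : C P.T = (P.lam P.T)⁻¹

structure SolvesDESystem (P : Params) (th A B C D E : ℝ → ℝ) : Prop where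
  hasDerivAt_D : ∀ t ∈ Icc (0:ℝ) P.T,
    HasDerivAt D ((P.eps t)⁻¹ * (A t + P.lam t * B t) * (D t + P.lam t * E t)
      - th t * (A t - D t)) t
  hasDerivAt_E : ∀ t ∈ Icc (0:ℝ) P.T,
    HasDerivAt E ((P.eps t)⁻¹ * (B t + P.lam t * C t) * (D t + P.lam t * E t)
      - th t * (B t - E t) + P.beta t * E t) t

theorem IsRiccatiSol.isABCSol {P : Params} {A B C D E F K : ℝ → ℝ}
    (h : IsRiccatiSol P A B C D E F K) : IsABCSol P A B C :=
  let ⟨hA, hAT, hB, hBT, hC, hCT, _⟩ := h; ⟨hA, hAT, hB, hBT, hC, hCT⟩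

theorem IsRiccatiSol.isDESol {P : Params} {A B C D E F K : ℝ → ℝ}
    (h : IsRiccatiSol P A B C D E F K) : IsDESol P P.theta A B C D E :=
  let ⟨_, _, _, _, _, _, hD, hDT, hE, hET, _⟩ := h; ⟨hD, hDT, hE, hET⟩

theorem IsDESol.solvesDESystem {P : Params} {th A B C D E : ℝ → ℝ} (h : IsDESol P th A B C D E) :
    SolvesDESystem P th A B C D E :=
  ⟨h.1, h.2.2.1⟩

namespace IsABCSol

variable {P : Params} {A B C : ℝ → ℝ}

theorem solvesDESystem (h : IsABCSol P A B C) (th : ℝ → ℝ) : SolvesDESystem P th A B C A B where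
  hasDerivAt_D t ht := (h.hasDerivAt_A t ht).congr_deriv (by ring)
  hasDerivAt_E t ht := (h.hasDerivAt_B t ht).congr_deriv (by ring)

theorem lam_mul_C_le_one (h : IsABCSol P A B C) : ∀ t ∈ Icc (0:ℝ) P.T, P.lam t * C t ≤ 1 := by
  have hu := nonneg_of_hasDerivAt_le_mul (f := fun t => 1 - P.lam t * C t)
    (p := fun t => 2 * P.beta t + gammaDot P t)
    (fun t ht => (hasDerivAt_const t 1).sub ((P.hlam_deriv t).mul (h.hasDerivAt_C t ht)))
    -- `(1 - λC)' = (2β + γ̇) (1 - λC) - λ ε⁻¹ (B + λC)²`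
    (fun t ht => by
      have hlam := P.lam_pos t ht
      have hsq := mul_nonneg hlam.le (mul_nonneg (P.eps_inv_pos t ht).le
        (sq_nonneg (B t + P.lam t * C t)))
      linear_combination hsq + (2 * P.beta t + gammaDot P t) * mul_inv_cancel₀ hlam.ne'
        + C t * P.gammaDot_mul_lam ht)
    ⟨0, forall_mem_image.2 fun t ht => (P.hnoarb t ht).le⟩
    (by simp [h.C_T, mul_inv_cancel₀ (P.lam_pos P.T ⟨P.hT.le, le_rfl⟩).ne'])
  exact fun t ht => by linarith [hu t ht]

theorem boundedAtFilter_inv_eps_mul_B_add_lam_mul_C (h : IsABCSol P A B C) :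
    BoundedAtFilter (𝓟 (Icc 0 P.T)) fun t => (P.eps t)⁻¹ * (B t + P.lam t * C t) :=
  P.boundedAtFilter_eps_inv.mul ((boundedAtFilter_of_hasDerivAt h.hasDerivAt_B).add
    (P.boundedAtFilter_lam.mul (boundedAtFilter_of_hasDerivAt h.hasDerivAt_C)))

theorem boundedAtFilter_drift (h : IsABCSol P A B C) :
    BoundedAtFilter (𝓟 (Icc 0 P.T)) fun t => (P.eps t)⁻¹ * (A t + P.lam t * B t)
      + P.lam t * ((P.eps t)⁻¹ * (B t + P.lam t * C t)) :=
  (P.boundedAtFilter_eps_inv.mul ((boundedAtFilter_of_hasDerivAt h.hasDerivAt_A).add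
    (P.boundedAtFilter_lam.mul (boundedAtFilter_of_hasDerivAt h.hasDerivAt_B)))).add
    (P.boundedAtFilter_lam.mul h.boundedAtFilter_inv_eps_mul_B_add_lam_mul_C)

theorem B_add_lam_mul_C_nonneg (h : IsABCSol P A B C)
    (hstrong : ∀ t ∈ Icc (0:ℝ) P.T, 0 < P.beta t + gammaDot P t) :
    ∀ t ∈ Icc (0:ℝ) P.T, 0 ≤ B t + P.lam t * C t :=
  nonneg_of_hasDerivAt_le_mul (f := fun t => B t + P.lam t * C t)
    (p := fun t => (P.eps t)⁻¹ * (A t + P.lam t * B t)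
      + P.lam t * ((P.eps t)⁻¹ * (B t + P.lam t * C t)) + P.beta t)
    (fun t ht => (h.hasDerivAt_B t ht).add ((P.hlam_deriv t).mul (h.hasDerivAt_C t ht)))
    -- `(B + λC)' = p (B + λC) - (β + γ̇) (1 - λC) - β`
    (fun t ht => by
      have hC := mul_nonneg (hstrong t ht).le (sub_nonneg.2 (h.lam_mul_C_le_one t ht))
      linear_combination hC + P.hbeta_pos t ht
        - (2 * P.beta t + gammaDot P t) * mul_inv_cancel₀ (P.lam_pos t ht).ne'
        - C t * P.gammaDot_mul_lam ht)
    (BoundedAtFilter.bddBelow_image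
      (h.boundedAtFilter_drift.add (boundedAtFilter_principal_iff.2 P.hbeta_bdd)))
    (by simp [h.B_T, h.C_T, mul_inv_cancel₀ (P.lam_pos P.T ⟨P.hT.le, le_rfl⟩).ne'])

theorem comparison_of_solvesDESystem (h : IsABCSol P A B C)
    (hstrong : ∀ t ∈ Icc (0:ℝ) P.T, 0 < P.beta t + gammaDot P t) {th₁ th₂ D₁ E₁ D₂ E₂ : ℝ → ℝ}
    (hth₁ : ∃ M, ∀ t ∈ Icc (0:ℝ) P.T, |th₁ t| ≤ M)
    (h₁ : SolvesDESystem P th₁ A B C D₁ E₁) (h₂ : SolvesDESystem P th₂ A B C D₂ E₂)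
    (hforce_f : ∀ t ∈ Icc (0:ℝ) P.T,
      0 ≤ (th₁ t - th₂ t) * (A t + P.lam t * B t - (D₂ t + P.lam t * E₂ t)))
    (hforce_g : ∀ t ∈ Icc (0:ℝ) P.T, 0 ≤ (th₁ t - th₂ t) * (E₂ t - B t))
    (hT_f : D₂ P.T + P.lam P.T * E₂ P.T ≤ D₁ P.T + P.lam P.T * E₁ P.T) (hT_g : E₁ P.T ≤ E₂ P.T) :
    ∀ t ∈ Icc (0:ℝ) P.T, D₂ t + P.lam t * E₂ t ≤ D₁ t + P.lam t * E₁ t ∧ E₁ t ≤ E₂ t := by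
  have hth₁' := boundedAtFilter_principal_iff.2 hth₁
  have hβ := boundedAtFilter_principal_iff.2 P.hbeta_bdd
  have key := nonneg_of_hasDerivAt_le_cooperative
    (f := fun t => D₁ t + P.lam t * E₁ t - (D₂ t + P.lam t * E₂ t)) (g := fun t => E₂ t - E₁ t)
    (p := fun t => (P.eps t)⁻¹ * (A t + P.lam t * B t)
      + P.lam t * ((P.eps t)⁻¹ * (B t + P.lam t * C t)) + th₁ t)
    (q := fun t => -(P.lam' t + P.beta t * P.lam t))
    (r := fun t => -((P.eps t)⁻¹ * (B t + P.lam t * C t))) (s := fun t => P.beta t + th₁ t)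
    (fun t ht => ((h₁.hasDerivAt_D t ht).add ((P.hlam_deriv t).mul (h₁.hasDerivAt_E t ht))).sub
      ((h₂.hasDerivAt_D t ht).add ((P.hlam_deriv t).mul (h₂.hasDerivAt_E t ht))))
    (fun t ht => (h₂.hasDerivAt_E t ht).sub (h₁.hasDerivAt_E t ht))
    (fun t ht => by linear_combination hforce_f t ht)
    (fun t ht => by linear_combination hforce_g t ht)
    (fun t ht => neg_nonpos.2 (P.lam'_add_beta_mul_lam_nonneg hstrong t ht))
    (fun t ht => neg_nonpos.2
      (mul_nonneg (P.eps_inv_pos t ht).le (h.B_add_lam_mul_C_nonneg hstrong t ht)))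
    (BoundedAtFilter.bddBelow_image (h.boundedAtFilter_drift.add hth₁'))
    (BoundedAtFilter.bddBelow_image (P.boundedAtFilter_lam'.add (hβ.mul P.boundedAtFilter_lam)).neg)
    (BoundedAtFilter.bddBelow_image h.boundedAtFilter_inv_eps_mul_B_add_lam_mul_C.neg)
    (BoundedAtFilter.bddBelow_image (hβ.add hth₁'))
    (sub_nonneg.2 hT_f) (sub_nonneg.2 hT_g)
  exact fun t ht => ⟨sub_nonneg.1 (key t ht).1, sub_nonneg.1 (key t ht).2⟩

theorem comparison_of_isDESol (h : IsABCSol P A B C)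
    (hstrong : ∀ t ∈ Icc (0:ℝ) P.T, 0 < P.beta t + gammaDot P t) {th th' D E D' E' : ℝ → ℝ}
    (hth : ∃ M, ∀ t ∈ Icc (0:ℝ) P.T, |th t| ≤ M) (hth' : ∃ M, ∀ t ∈ Icc (0:ℝ) P.T, |th' t| ≤ M)
    (hDE : IsDESol P th A B C D E) (hDE' : IsDESol P th' A B C D' E')
    (hle : ∀ t ∈ Icc (0:ℝ) P.T, th' t ≤ th t) :
    ∀ t ∈ Icc (0:ℝ) P.T, D' t + P.lam t * E' t ≤ D t + P.lam t * E t ∧ E t ≤ E' t := by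
  have hAB := h.comparison_of_solvesDESystem hstrong hth' (h.solvesDESystem th') hDE'.solvesDESystem
    (fun _ _ => by simp) (fun _ _ => by simp) (by simp [h.A_T, h.B_T, hDE'.2.1, hDE'.2.2.2])
    (by simp [h.B_T, hDE'.2.2.2])
  exact h.comparison_of_solvesDESystem hstrong hth hDE.solvesDESystem hDE'.solvesDESystem
    (fun t ht => mul_nonneg (sub_nonneg.2 (hle t ht)) (sub_nonneg.2 (hAB t ht).1))
    (fun t ht => mul_nonneg (sub_nonneg.2 (hle t ht)) (sub_nonneg.2 (hAB t ht).2))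
    (by simp [hDE.2.1, hDE.2.2.2, hDE'.2.1, hDE'.2.2.2]) (by simp [hDE.2.2.2, hDE'.2.2.2])

end IsABCSol

theorem riccati_theta_comparison_general (P : Params)
    (hstrong : ∀ t ∈ Icc (0:ℝ) P.T, 0 < P.beta t + gammaDot P t)
    (A B C D E F K : ℝ → ℝ) (hsol : IsRiccatiSol P A B C D E F K)
    (thetaTil : ℝ → ℝ)
    (hthetaTil_bdd : ∃ M, ∀ t ∈ Icc (0:ℝ) P.T, |thetaTil t| ≤ M)
    (Dtil Etil : ℝ → ℝ) (htil : IsDESol P thetaTil A B C Dtil Etil)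
    (hcomp : ∀ t ∈ Icc (0:ℝ) P.T, thetaTil t ≤ P.theta t) :
    (∀ t ∈ Icc (0:ℝ) P.T,
        Dtil t + P.lam t * Etil t ≤ D t + P.lam t * E t ∧ E t ≤ Etil t) ∧
    ((∀ t ∈ Icc (0:ℝ) P.T, 0 ≤ P.theta t) →
        ∀ t ∈ Icc (0:ℝ) P.T, 0 ≤ D t + P.lam t * E t ∧ E t ≤ 0) := by
  have hABC := hsol.isABCSol
  refine ⟨hABC.comparison_of_isDESol hstrong P.htheta_bdd hthetaTil_bdd hsol.isDESol htil hcomp,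
    fun hθ t ht => ?_⟩
  have hzero : IsDESol P (fun _ => 0) A B C (fun _ => 0) (fun _ => 0) :=
    ⟨fun t _ => by simpa using hasDerivAt_const t (0:ℝ), rfl,
      fun t _ => by simpa using hasDerivAt_const t (0:ℝ), rfl⟩
  simpa using
    hABC.comparison_of_isDESol hstrong P.htheta_bdd ⟨0, by simp⟩ hsol.isDESol hzero hθ t ht

/-- Comparison in `θ`: if `β_t + γ̇_t > 0` and `θ_t ≥ θ̃_t` on `[0,T]`,
then `D_t + λ_t E_t ≥ D̃_t + λ_t Ẽ_t` and `E_t ≤ Ẽ_t` on `[0,T]`. In particular,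
`θ ≥ 0` implies `D_t + λ_t E_t ≥ 0` and `E_t ≤ 0` on `[0,T]`. -/
theorem riccati_theta_comparison (P : Params)
    (hstrong : ∀ t ∈ Icc (0:ℝ) P.T, 0 < P.beta t + gammaDot P t)
    (A B C D E F K : ℝ → ℝ) (hsol : IsRiccatiSol P A B C D E F K)
    (thetaTil : ℝ → ℝ) (hthetaTil_meas : Measurable thetaTil)
    (hthetaTil_bdd : ∃ M, ∀ t ∈ Icc (0:ℝ) P.T, |thetaTil t| ≤ M)
    (Dtil Etil : ℝ → ℝ) (htil : IsDESol P thetaTil A B C Dtil Etil)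
    (hcomp : ∀ t ∈ Icc (0:ℝ) P.T, thetaTil t ≤ P.theta t) :
    (∀ t ∈ Icc (0:ℝ) P.T,
        Dtil t + P.lam t * Etil t ≤ D t + P.lam t * E t ∧ E t ≤ Etil t) ∧
    ((∀ t ∈ Icc (0:ℝ) P.T, 0 ≤ P.theta t) →
        ∀ t ∈ Icc (0:ℝ) P.T, 0 ≤ D t + P.lam t * E t ∧ E t ≤ 0) :=
  riccati_theta_comparison_general P hstrong A B C D E F K hsol thetaTil hthetaTil_bdd Dtil Etil
    htil hcomp
end

section
/- No free roundtrips: assume λ_{0−} ≤ λ_0 and 2β_t + γ̇_t > 0 for all t ∈ [0,T], and let the initial impact state be y = 0. Let (J_0, q, J_T) be a trading path satisfying the roundtrip constraint J_0 + ∫₀ᵀ q_t dt + J_T = 0. If the total execution cost (1/2)(y + Y_0)J_0 + ∫₀ᵀ Y_t q_t dt + (1/2)(Y_{T−} + Y_T)J_T + (1/2)∫₀ᵀ ε_t q_t² dt equals 0, then J_0 = 0, J_T = 0, and q_t = 0 for Lebesgue-almost every t. -/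
/-!
The impact `Y` solves `Ẏ = -βY + λq`, so the energy `Y² / λ` is absolutely continuous with
derivative `2Yq - (2β + γ̇) / λ · Y²`. Integrating it writes twice the execution cost as
`Y₀² (1/λ_{0-} - 1/λ₀) + (Y_{T-} + λ_T J_T)² / λ_T + ∫ (2β + γ̇) / λ · Y² + ∫ ε q²`,
a sum of nonnegative terms. Zero cost thus forces `q = 0` and `Y = 0` almost everywhere; by
continuity `Y₀ = 0`, hence `J₀ = 0`, and the roundtrip constraint gives `J_T = 0`.

The equation for `Y` is stated with Bochner integrals, which vanish on non-integrable
integrands. Integrability of `-βY + λq` on all of `[0, T]` follows from a Gronwall bound on `Y`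
up to the supremum of the times to which it is integrable, past which `Y` would be constant.
-/

open Set MeasureTheory intervalIntegral Filter Topology Interval

theorem AbsolutelyContinuousOnInterval.congr {X : Type*} [PseudoMetricSpace X] {f g : ℝ → X}
    {a b : ℝ} (hf : AbsolutelyContinuousOnInterval f a b) (hfg : EqOn f g (uIcc a b)) :
    AbsolutelyContinuousOnInterval g a b := by
  refine hf.congr' ?_
  filter_upwards [eventually_inf_principal.2 (Eventually.of_forall fun _ hE => hE)] with E hE
  exact Finset.sum_congr rfl fun i hi => by rw [hfg (hE.1 i hi).1, hfg (hE.1 i hi).2]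

section Primitive

variable {a b : ℝ} {f F : ℝ → ℝ}

theorem absolutelyContinuousOnInterval_of_eq_primitive (hab : a ≤ b)
    (hf : IntervalIntegrable f volume a b)
    (hF : ∀ t ∈ Icc a b, F t = F a + ∫ s in a..t, f s) :
    AbsolutelyContinuousOnInterval F a b := by
  have hconst : AbsolutelyContinuousOnInterval (fun _ => F a) a b :=
    (LipschitzWith.const (F a)).lipschitzOnWith.absolutelyContinuousOnInterval
  refine (hconst.fun_add
    (hf.absolutelyContinuousOnInterval_intervalIntegral left_mem_uIcc)).congr ?_
  rw [uIcc_of_le hab]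
  exact fun t ht => (hF t ht).symm

theorem ae_hasDerivAt_of_eq_primitive (hf : IntervalIntegrable f volume a b)
    (hF : ∀ t ∈ Icc a b, F t = F a + ∫ s in a..t, f s) :
    ∀ᵐ t, t ∈ Ioo a b → HasDerivAt F (f t) t := by
  filter_upwards [hf.ae_hasDerivAt_integral] with t ht htab
  have hab : a ≤ b := htab.1.le.trans htab.2.le
  have hmem : t ∈ uIcc a b := by rw [uIcc_of_le hab]; exact Ioo_subset_Icc_self htab
  refine ((ht hmem a left_mem_uIcc).const_add (F a)).congr_of_eventuallyEq ?_
  filter_upwards [Icc_mem_nhds htab.1 htab.2] with s hs using hF s hs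

theorem continuousOn_of_eq_primitive (hab : a ≤ b)
    (hf : IntervalIntegrable f volume a b)
    (hF : ∀ t ∈ Icc a b, F t = F a + ∫ s in a..t, f s) :
    ContinuousOn F (Icc a b) := by
  simpa [uIcc_of_le hab] using
    (absolutelyContinuousOnInterval_of_eq_primitive hab hf hF).continuousOn

end Primitive

theorem le_mul_exp_of_le_add_mul_integral {a b A M : ℝ} {v : ℝ → ℝ} (hab : a ≤ b)
    (hM : 0 ≤ M) (hv : ContinuousOn v (Icc a b))
    (h : ∀ x ∈ Icc a b, v x ≤ A + M * ∫ s in a..x, v s) :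
    ∀ x ∈ Icc a b, v x ≤ A * Real.exp (M * (x - a)) := by
  -- extend `v` continuously to `ℝ`, so that its primitive is differentiable everywhere
  set u : ℝ → ℝ := fun x => v (projIcc a b hab x)
  have hu : Continuous u := hv.comp_continuous (continuous_subtype_val.comp continuous_projIcc)
    fun x => (projIcc a b hab x).2
  have hu_eq : EqOn u v (Icc a b) := fun x hx => by simp [u, projIcc_of_mem hab hx]
  set w : ℝ → ℝ := fun x => A + M * ∫ s in a..x, u s
  have hvw : ∀ x ∈ Icc a b, v x ≤ w x := fun x hx => by
    show v x ≤ A + M * ∫ s in a..x, u s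
    rw [show (∫ s in a..x, u s) = ∫ s in a..x, v s from integral_congr <| hu_eq.mono <| by
      rw [uIcc_of_le hx.1]; exact Icc_subset_Icc le_rfl hx.2]
    exact h x hx
  have hgron := le_gronwallBound_of_liminf_deriv_right_le (f := w) (f' := fun x => M * u x)
    (δ := A) (K := M) (ε := 0) (a := a) (b := b) (by fun_prop)
    (fun x _ r hr => (((hu.integral_hasStrictDerivAt a x).hasDerivAt.const_mul M).const_add
      A).hasDerivWithinAt.liminf_right_slope_le hr)
    (by simp [w])
    (fun x hx => by
      rw [add_zero, hu_eq (Ico_subset_Icc_self hx)]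
      exact mul_le_mul_of_nonneg_left (hvw x (Ico_subset_Icc_self hx)) hM)
  intro x hx
  simpa [gronwallBound_ε0] using (hvw x hx).trans (hgron x hx)

theorem intervalIntegrable_of_forall_lt {a c : ℝ} {f h : ℝ → ℝ} (hac : a ≤ c)
    (hf : ∀ t ∈ Ico a c, IntervalIntegrable f volume a t) (hh : IntegrableOn h (Ioc a c))
    (hfh : ∀ s ∈ Ioo a c, ‖f s‖ ≤ h s) : IntervalIntegrable f volume a c := by
  rcases hac.eq_or_lt with rfl | hac
  · exact .refl
  obtain ⟨u, -, hu_mem, hu⟩ := exists_seq_strictMono_tendsto' hac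
  have hfu : ∀ n, IntegrableOn f (Ioc a (u n)) := fun n =>
    (intervalIntegrable_iff_integrableOn_Ioc_of_le (hu_mem n).1.le).1
      (hf (u n) ⟨(hu_mem n).1.le, (hu_mem n).2⟩)
  have hh0 : 0 ≤ᵐ[volume.restrict (Ioc a c)] h := by
    rw [← restrict_Ioo_eq_restrict_Ioc]
    exact ae_restrict_of_forall_mem measurableSet_Ioo fun s hs => (norm_nonneg _).trans (hfh s hs)
  rw [intervalIntegrable_iff_integrableOn_Ioc_of_le hac.le]
  refine integrableOn_Ioc_of_intervalIntegral_norm_bounded_right (I := ∫ s in Ioc a c, h s) hfu hu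
    (Eventually.of_forall fun n => ?_)
  have hsub : Ioc a (u n) ⊆ Ioc a c := Ioc_subset_Ioc le_rfl (hu_mem n).2.le
  calc ∫ s in Ioc a (u n), ‖f s‖ ≤ ∫ s in Ioc a (u n), h s :=
        setIntegral_mono_on (hfu n).norm (hh.mono_set hsub) measurableSet_Ioc fun s hs =>
          hfh s ⟨hs.1, hs.2.trans_lt (hu_mem n).2⟩
    _ ≤ ∫ s in Ioc a c, h s := setIntegral_mono_set hh hh0 hsub.eventuallyLE

section LinearIntegralEquation

variable {a b t M : ℝ} {β g Y : ℝ → ℝ}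

theorem abs_le_add_mul_integral_of_eq_linear_integral (ht : t ∈ Icc a b)
    (hβ : ∀ s ∈ Icc a b, |β s| ≤ M) (hg : IntervalIntegrable g volume a b)
    (hY : ∀ s ∈ Icc a b, Y s = Y a + ∫ u in a..s, (-β u * Y u + g u))
    (hf : IntervalIntegrable (fun s => -β s * Y s + g s) volume a t) :
    ∀ x ∈ Icc a t, |Y x| ≤ |Y a| + (∫ u in a..b, |g u|) + M * ∫ s in a..x, |Y s| := by
  have hYc :=
    (continuousOn_of_eq_primitive ht.1 hf fun s hs => hY s ⟨hs.1, hs.2.trans ht.2⟩).abs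
  intro x hx
  have hx' : x ∈ Icc a b := ⟨hx.1, hx.2.trans ht.2⟩
  have hgx : IntervalIntegrable g volume a x := hg.mono_set <| uIcc_subset_uIcc left_mem_uIcc <| by
    rwa [uIcc_of_le (hx.1.trans hx'.2)]
  have hYx : IntervalIntegrable (fun s => |Y s|) volume a x :=
    (hYc.mono (by rw [uIcc_of_le hx.1]; exact Icc_subset_Icc le_rfl hx.2)).intervalIntegrable
  have hfx : IntervalIntegrable (fun s => -β s * Y s + g s) volume a x := hf.mono_set <| by
    rw [uIcc_of_le hx.1, uIcc_of_le ht.1]; exact Icc_subset_Icc le_rfl hx.2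
  calc |Y x| ≤ |Y a| + ∫ s in a..x, |-β s * Y s + g s| := by
        rw [hY x hx']
        exact (abs_add_le _ _).trans (by gcongr; exact abs_integral_le_integral_abs hx.1)
    _ ≤ |Y a| + ∫ s in a..x, (M * |Y s| + |g s|) := by
        gcongr
        refine integral_mono_on hx.1 hfx.abs ((hYx.const_mul M).add hgx.abs) fun s hs => ?_
        calc |-β s * Y s + g s| ≤ |β s| * |Y s| + |g s| := by
              simpa [abs_mul] using abs_add_le (-β s * Y s) (g s)
          _ ≤ M * |Y s| + |g s| := by gcongr; exact hβ s ⟨hs.1, hs.2.trans hx'.2⟩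
    _ = |Y a| + (∫ s in a..x, |g s|) + M * ∫ s in a..x, |Y s| := by
        rw [integral_add (hYx.const_mul M) hgx.abs, intervalIntegral.integral_const_mul]; ring
    _ ≤ |Y a| + (∫ s in a..b, |g s|) + M * ∫ s in a..x, |Y s| := by
        gcongr
        exact integral_mono_interval le_rfl hx.1 hx'.2
          (Eventually.of_forall fun _ => abs_nonneg _) hg.abs

theorem abs_le_of_eq_linear_integral (ht : t ∈ Icc a b)
    (hβ : ∀ s ∈ Icc a b, |β s| ≤ M) (hg : IntervalIntegrable g volume a b)
    (hY : ∀ s ∈ Icc a b, Y s = Y a + ∫ u in a..s, (-β u * Y u + g u))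
    (hf : IntervalIntegrable (fun s => -β s * Y s + g s) volume a t) :
    ∀ s ∈ Icc a t, |Y s| ≤ (|Y a| + ∫ u in a..b, |g u|) * Real.exp (M * (b - a)) := by
  have hM : 0 ≤ M := (abs_nonneg _).trans (hβ a ⟨le_rfl, ht.1.trans ht.2⟩)
  have hYc :=
    (continuousOn_of_eq_primitive ht.1 hf fun s hs => hY s ⟨hs.1, hs.2.trans ht.2⟩).abs
  intro s hs
  refine (le_mul_exp_of_le_add_mul_integral ht.1 hM hYc
    (abs_le_add_mul_integral_of_eq_linear_integral ht hβ hg hY hf) s hs).trans ?_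
  gcongr
  · exact add_nonneg (abs_nonneg _) (integral_nonneg (ht.1.trans ht.2) fun _ _ => abs_nonneg _)
  · exact hs.2.trans ht.2

theorem intervalIntegrable_of_eq_linear_integral (hab : a ≤ b) (hβm : Measurable β)
    (hβ : ∀ s ∈ Icc a b, |β s| ≤ M) (hg : IntervalIntegrable g volume a b)
    (hY : ∀ t ∈ Icc a b, Y t = Y a + ∫ s in a..t, (-β s * Y s + g s)) :
    IntervalIntegrable (fun s => -β s * Y s + g s) volume a b := by
  set f := fun s => -β s * Y s + g s
  have hM : 0 ≤ M := (abs_nonneg _).trans (hβ a (left_mem_Icc.2 hab))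
  have hβi : IntervalIntegrable β volume a b := by
    rw [intervalIntegrable_iff_integrableOn_Icc_of_le hab]
    exact Measure.integrableOn_of_bounded measure_Icc_lt_top.ne hβm.aestronglyMeasurable
      ((ae_restrict_iff' measurableSet_Icc).2 (Eventually.of_forall hβ))
  set S := {t ∈ Icc a b | IntervalIntegrable f volume a t}
  have haS : a ∈ S := ⟨left_mem_Icc.2 hab, .refl⟩
  have hSb : BddAbove S := ⟨b, fun t ht => ht.1.2⟩
  have hac : a ≤ sSup S := le_csSup hSb haS
  have hcb : sSup S ≤ b := csSup_le ⟨a, haS⟩ fun t ht => ht.1.2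
  have hSub : ∀ s ∈ Ico a (sSup S), ∃ t ∈ S, s < t :=
    fun s hs => exists_lt_of_lt_csSup ⟨a, haS⟩ hs.2
  set K := (|Y a| + ∫ u in a..b, |g u|) * Real.exp (M * (b - a))
  have hcS : IntervalIntegrable f volume a (sSup S) := by
    refine intervalIntegrable_of_forall_lt hac (fun t ht => ?_)
      ((integrableOn_const (C := M * K) measure_Ioc_lt_top.ne).add
        ((intervalIntegrable_iff_integrableOn_Ioc_of_le hab).1 hg.abs |>.mono_set
          (Ioc_subset_Ioc le_rfl hcb)))
      fun s hs => ?_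
    · obtain ⟨t', ⟨ht'b, ht'S⟩, htt'⟩ := hSub t ht
      exact ht'S.mono_set (uIcc_subset_uIcc left_mem_uIcc (by
        rw [uIcc_of_le ht'b.1]; exact ⟨ht.1, htt'.le⟩))
    · obtain ⟨t, ⟨htab, htS⟩, hst⟩ := hSub s (Ioo_subset_Ico_self hs)
      calc ‖f s‖ ≤ |β s| * |Y s| + |g s| := by
            simpa [f, abs_mul] using abs_add_le (-β s * Y s) (g s)
        _ ≤ M * K + |g s| := by
            gcongr
            · exact hβ s ⟨hs.1.le, hs.2.le.trans hcb⟩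
            · exact abs_le_of_eq_linear_integral htab hβ hg hY htS s ⟨hs.1.le, hst.le⟩
  suffices hcb : sSup S = b by rwa [← hcb]
  by_contra hne
  -- past `sSup S` the integral in `hY` takes the junk value `0`, freezing `Y` at `Y a`
  have hfrozen : ∀ s ∈ Ioc (sSup S) b, f s = -β s * Y a + g s := by
    intro s hs
    have hs' : s ∈ Icc a b := ⟨hac.trans hs.1.le, hs.2⟩
    show -β s * Y s + g s = _
    rw [hY s hs', integral_undef fun h => (le_csSup hSb ⟨hs', h⟩).not_gt hs.1, add_zero]
  have htail : IntervalIntegrable f volume (sSup S) b :=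
    (((hβi.neg.mul_const (Y a)).add hg).mono_set (by
      rw [uIcc_of_le hcb, uIcc_of_le hab]; exact Icc_subset_Icc hac le_rfl)).congr
      (by rw [uIoc_of_le hcb]; exact fun s hs => (hfrozen s hs).symm)
  exact (le_csSup hSb ⟨right_mem_Icc.2 hab, hcS.trans htail⟩).not_gt (hcb.lt_of_ne hne)

end LinearIntegralEquation

theorem absolutelyContinuousOnInterval_inv {a b c L : ℝ} {g g' : ℝ → ℝ} (hc : 0 < c)
    (hg : ∀ t ∈ uIcc a b, c ≤ g t) (hg' : ∀ t ∈ uIcc a b, HasDerivAt g (g' t) t)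
    (hg'L : ∀ t ∈ uIcc a b, |g' t| ≤ L) :
    AbsolutelyContinuousOnInterval (fun t => (g t)⁻¹) a b := by
  refine LipschitzOnWith.absolutelyContinuousOnInterval (K := (L / c ^ 2).toNNReal) <|
    (convex_uIcc a b).lipschitzOnWith_of_nnnorm_hasDerivWithin_le
      (fun t ht => ((hg' t ht).inv (hc.trans_le (hg t ht)).ne').hasDerivWithinAt) fun t ht => ?_
  rw [← NNReal.coe_le_coe, coe_nnnorm, Real.coe_toNNReal', norm_div, norm_neg, norm_pow,
    Real.norm_eq_abs, Real.norm_eq_abs, abs_of_pos (hc.trans_le (hg t ht))]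
  exact le_max_of_le_left (div_le_div₀ ((abs_nonneg _).trans (hg'L t ht)) (hg'L t ht)
    (by positivity) (pow_le_pow_left₀ hc.le (hg t ht) 2))

section ImpactEnergy

variable {a b c L : ℝ} {beta lam lam' q Y : ℝ → ℝ}

theorem absolutelyContinuousOnInterval_sq_div (hab : a ≤ b)
    (hf : IntervalIntegrable (fun s => -beta s * Y s + lam s * q s) volume a b)
    (hY : ∀ t ∈ Icc a b, Y t = Y a + ∫ s in a..t, (-beta s * Y s + lam s * q s))
    (hc : 0 < c) (hlam : ∀ t ∈ Icc a b, c ≤ lam t)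
    (hlam' : ∀ t ∈ Icc a b, HasDerivAt lam (lam' t) t)
    (hlam'L : ∀ t ∈ Icc a b, |lam' t| ≤ L) :
    AbsolutelyContinuousOnInterval (fun t => Y t ^ 2 / lam t) a b := by
  have hYac := absolutelyContinuousOnInterval_of_eq_primitive hab hf hY
  rw [← uIcc_of_le hab] at hlam hlam' hlam'L
  convert (hYac.fun_mul hYac).fun_mul (absolutelyContinuousOnInterval_inv hc hlam hlam' hlam'L)
    using 2 with t
  ring

theorem deriv_sq_div_ae_eq (hab : a ≤ b)
    (hf : IntervalIntegrable (fun s => -beta s * Y s + lam s * q s) volume a b)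
    (hY : ∀ t ∈ Icc a b, Y t = Y a + ∫ s in a..t, (-beta s * Y s + lam s * q s))
    (hlam : ∀ t ∈ Icc a b, 0 < lam t) (hlam' : ∀ t ∈ Icc a b, HasDerivAt lam (lam' t) t) :
    deriv (fun t => Y t ^ 2 / lam t) =ᵐ[volume.restrict (Ι a b)]
      fun t => 2 * (Y t * q t) - (2 * beta t + lam' t / lam t) / lam t * Y t ^ 2 := by
  rw [uIoc_of_le hab, ← restrict_Ioo_eq_restrict_Ioc]
  filter_upwards [ae_restrict_mem measurableSet_Ioo,
    ae_restrict_of_ae (ae_hasDerivAt_of_eq_primitive hf hY)] with t ht hYt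
  have hlt := hlam t (Ioo_subset_Icc_self ht)
  rw [((hYt ht).fun_pow 2 |>.fun_div (hlam' t (Ioo_subset_Icc_self ht)) hlt.ne').deriv]
  field_simp
  ring

theorem intervalIntegrable_rate_mul_sq (hab : a ≤ b)
    (hf : IntervalIntegrable (fun s => -beta s * Y s + lam s * q s) volume a b)
    (hY : ∀ t ∈ Icc a b, Y t = Y a + ∫ s in a..t, (-beta s * Y s + lam s * q s))
    (hq : IntervalIntegrable q volume a b) (hc : 0 < c) (hlam : ∀ t ∈ Icc a b, c ≤ lam t)
    (hlam' : ∀ t ∈ Icc a b, HasDerivAt lam (lam' t) t)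
    (hlam'L : ∀ t ∈ Icc a b, |lam' t| ≤ L) :
    IntervalIntegrable (fun t => (2 * beta t + lam' t / lam t) / lam t * Y t ^ 2) volume a b := by
  have hYq : IntervalIntegrable (fun t => Y t * q t) volume a b :=
    hq.continuousOn_mul (absolutelyContinuousOnInterval_of_eq_primitive hab hf hY).continuousOn
  have hE := absolutelyContinuousOnInterval_sq_div hab hf hY hc hlam hlam' hlam'L
  refine ((hYq.const_mul 2).sub hE.intervalIntegrable_deriv).congr_ae ?_
  filter_upwards [deriv_sq_div_ae_eq hab hf hY (fun t ht => hc.trans_le (hlam t ht)) hlam']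
    with t ht
  rw [ht]
  ring

theorem two_mul_integral_mul_eq (hab : a ≤ b)
    (hf : IntervalIntegrable (fun s => -beta s * Y s + lam s * q s) volume a b)
    (hY : ∀ t ∈ Icc a b, Y t = Y a + ∫ s in a..t, (-beta s * Y s + lam s * q s))
    (hq : IntervalIntegrable q volume a b) (hc : 0 < c) (hlam : ∀ t ∈ Icc a b, c ≤ lam t)
    (hlam' : ∀ t ∈ Icc a b, HasDerivAt lam (lam' t) t)
    (hlam'L : ∀ t ∈ Icc a b, |lam' t| ≤ L) :
    2 * ∫ t in a..b, Y t * q t = Y b ^ 2 / lam b - Y a ^ 2 / lam a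
      + ∫ t in a..b, (2 * beta t + lam' t / lam t) / lam t * Y t ^ 2 := by
  have hYq : IntervalIntegrable (fun t => Y t * q t) volume a b :=
    hq.continuousOn_mul (absolutelyContinuousOnInterval_of_eq_primitive hab hf hY).continuousOn
  have hE := absolutelyContinuousOnInterval_sq_div hab hf hY hc hlam hlam' hlam'L
  rw [← hE.integral_deriv_eq_sub, integral_congr_ae_restrict
      (deriv_sq_div_ae_eq hab hf hY (fun t ht => hc.trans_le (hlam t ht)) hlam'),
    integral_sub (hYq.const_mul 2)
      (intervalIntegrable_rate_mul_sq hab hf hY hq hc hlam hlam' hlam'L),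
    intervalIntegral.integral_const_mul]
  ring

end ImpactEnergy

theorem ae_eq_zero_of_integral_mul_sq_eq_zero {a b : ℝ} (hab : a ≤ b) {w u : ℝ → ℝ}
    (hw : ∀ t ∈ Icc a b, 0 < w t)
    (hint : IntervalIntegrable (fun t => w t * u t ^ 2) volume a b)
    (h0 : ∫ t in a..b, w t * u t ^ 2 = 0) : ∀ᵐ t ∂volume.restrict (Icc a b), u t = 0 := by
  rw [integral_of_le hab] at h0
  rw [intervalIntegrable_iff_integrableOn_Ioc_of_le hab] at hint
  have hw' : ∀ t ∈ Ioc a b, 0 < w t := fun t ht => hw t (Ioc_subset_Icc_self ht)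
  rw [← Measure.restrict_congr_set Ioc_ae_eq_Icc]
  filter_upwards [(setIntegral_eq_zero_iff_of_nonneg_ae
    ((ae_restrict_iff' measurableSet_Ioc).2 (Eventually.of_forall fun t ht =>
      mul_nonneg (hw' t ht).le (sq_nonneg _))) hint).1 h0,
    ae_restrict_mem measurableSet_Ioc] with t ht hmem
  simpa [(hw' t hmem).ne'] using ht

theorem intervalIntegrable_of_integrableOn_sq {a b : ℝ} (hab : a ≤ b) {q : ℝ → ℝ}
    (hq : AEStronglyMeasurable q) (hq2 : IntegrableOn (fun t => q t ^ 2) (Icc a b)) :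
    IntervalIntegrable q volume a b := by
  rw [intervalIntegrable_iff_integrableOn_Icc_of_le hab]
  exact ((memLp_two_iff_integrable_sq hq.restrict).2 hq2).integrable one_le_two

theorem intervalIntegrable_bdd_mul_of_integrableOn {a b C : ℝ} (hab : a ≤ b) {w f : ℝ → ℝ}
    (hf : IntegrableOn f (Icc a b)) (hw : Measurable w) (hwC : ∀ t ∈ Icc a b, |w t| ≤ C) :
    IntervalIntegrable (fun t => w t * f t) volume a b := by
  rw [intervalIntegrable_iff_integrableOn_Icc_of_le hab]
  exact hf.bdd_mul hw.aestronglyMeasurable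
    ((ae_restrict_iff' measurableSet_Icc).2 (Eventually.of_forall hwC))

theorem two_mul_execution_cost_eq {lam0m lam0 lamT Y0 YT J0 JT Q R E : ℝ} (hlam0m : lam0m ≠ 0)
    (hlamT : lamT ≠ 0) (hY0 : Y0 = lam0m * J0) (hQ : 2 * Q = YT ^ 2 / lamT - Y0 ^ 2 / lam0 + R) :
    2 * ((1/2) * Y0 * J0 + Q + (1/2) * (YT + (YT + lamT * JT)) * JT + (1/2) * E)
      = (Y0 ^ 2 / lam0m - Y0 ^ 2 / lam0) + (YT + lamT * JT) ^ 2 / lamT + R + E := by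
  subst hY0
  have hinit : (lam0m * J0) ^ 2 / lam0m = lam0m * J0 * J0 := by field_simp
  have hfinal : (YT + lamT * JT) ^ 2 / lamT = YT ^ 2 / lamT + 2 * YT * JT + lamT * JT ^ 2 := by
    field_simp; ring
  linear_combination hQ - hinit - hfinal

theorem no_free_roundtrips_general
    (T : ℝ) (hT : 0 < T) (lam0m y : ℝ) (hlam0m : 0 < lam0m)
    (beta lam lam' eps : ℝ → ℝ)
    (hbeta_meas : Measurable beta) (heps_meas : Measurable eps)
    (hbeta_bdd : ∃ M, ∀ t ∈ Icc (0:ℝ) T, |beta t| ≤ M)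
    (heps_lb : ∃ c, 0 < c ∧ ∀ t ∈ Icc (0:ℝ) T, c ≤ eps t)
    (heps_ub : ∃ M, ∀ t ∈ Icc (0:ℝ) T, eps t ≤ M)
    (hlam_lb : ∃ c, 0 < c ∧ ∀ t ∈ Icc (0:ℝ) T, c ≤ lam t)
    (hlam_deriv : ∀ t, HasDerivAt lam (lam' t) t)
    (hlam'_bdd : ∃ M, ∀ t, |lam' t| ≤ M)
    (J0 JT : ℝ) (q : ℝ → ℝ) (hq_meas : Measurable q)
    (hq_sq : IntegrableOn (fun t => q t ^ 2) (Icc (0:ℝ) T))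
    (Y : ℝ → ℝ) (hY0 : Y 0 = y + lam0m * J0)
    (hY : ∀ t ∈ Icc (0:ℝ) T,
        Y t = Y 0 + ∫ s in (0:ℝ)..t, (-beta s * Y s + lam s * q s))
    (hle : lam0m ≤ lam 0)
    (hnoarb : ∀ t ∈ Icc (0:ℝ) T, 0 < 2 * beta t + lam' t / lam t)
    (hy : y = 0)
    (hconstraint : J0 + (∫ t in (0:ℝ)..T, q t) + JT = 0)
    (hcost : (1/2) * (y + Y 0) * J0 + (∫ t in (0:ℝ)..T, Y t * q t)
      + (1/2) * (Y T + (Y T + lam T * JT)) * JT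
      + (1/2) * (∫ t in (0:ℝ)..T, eps t * q t ^ 2) = 0) :
    J0 = 0 ∧ JT = 0 ∧ ∀ᵐ t ∂(volume.restrict (Icc (0:ℝ) T)), q t = 0 := by
  subst hy
  rw [zero_add] at hY0 hcost
  obtain ⟨Mb, hMb⟩ := hbeta_bdd
  obtain ⟨ce, hce, hce_le⟩ := heps_lb
  obtain ⟨Me, hMe⟩ := heps_ub
  obtain ⟨cl, hcl, hcl_le⟩ := hlam_lb
  obtain ⟨L, hL⟩ := hlam'_bdd
  have hT' := hT.le
  have heps_pos : ∀ t ∈ Icc 0 T, 0 < eps t := fun t ht => hce.trans_le (hce_le t ht)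
  have hlam_pos : ∀ t ∈ Icc 0 T, 0 < lam t := fun t ht => hcl.trans_le (hcl_le t ht)
  have hrate_pos : ∀ t ∈ Icc 0 T, 0 < (2 * beta t + lam' t / lam t) / lam t :=
    fun t ht => div_pos (hnoarb t ht) (hlam_pos t ht)
  have hq := intervalIntegrable_of_integrableOn_sq hT' hq_meas.aestronglyMeasurable hq_sq
  have hf := intervalIntegrable_of_eq_linear_integral hT' hbeta_meas hMb
    (hq.continuousOn_mul fun t _ => (hlam_deriv t).continuousAt.continuousWithinAt) hY
  have hepsq := intervalIntegrable_bdd_mul_of_integrableOn hT' hq_sq heps_meas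
    fun t ht => (abs_of_pos (heps_pos t ht)).trans_le (hMe t ht)
  have hsum := two_mul_execution_cost_eq (JT := JT) (E := ∫ t in (0:ℝ)..T, eps t * q t ^ 2)
    hlam0m.ne' (hlam_pos T ⟨hT', le_rfl⟩).ne' hY0
    (two_mul_integral_mul_eq hT' hf hY hq hcl hcl_le (fun t _ => hlam_deriv t) fun t _ => hL t)
  rw [hcost, mul_zero] at hsum
  have hinit : 0 ≤ Y 0 ^ 2 / lam0m - Y 0 ^ 2 / lam 0 :=
    sub_nonneg.2 (div_le_div_of_nonneg_left (sq_nonneg _) hlam0m hle)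
  have hfinal : 0 ≤ (Y T + lam T * JT) ^ 2 / lam T :=
    div_nonneg (sq_nonneg _) (hlam_pos T ⟨hT', le_rfl⟩).le
  have hR := integral_nonneg (μ := volume) hT' fun t ht =>
    mul_nonneg (hrate_pos t ht).le (sq_nonneg (Y t))
  have hE := integral_nonneg (μ := volume) hT' fun t ht =>
    mul_nonneg (heps_pos t ht).le (sq_nonneg (q t))
  have hq0 := ae_eq_zero_of_integral_mul_sq_eq_zero hT' heps_pos hepsq (by linarith)
  have hY_ae := ae_eq_zero_of_integral_mul_sq_eq_zero hT' hrate_pos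
    (intervalIntegrable_rate_mul_sq hT' hf hY hq hcl hcl_le (fun t _ => hlam_deriv t)
      fun t _ => hL t) (by linarith)
  have hY_init : Y 0 = 0 := Measure.eqOn_Icc_of_ae_eq volume hT.ne hY_ae
    (continuousOn_of_eq_primitive hT' hf hY) continuousOn_const ⟨le_rfl, hT'⟩
  have hJ0 : J0 = 0 := by simpa [hY_init, hlam0m.ne'] using hY0
  have hq_int : ∫ t in (0:ℝ)..T, q t = 0 := integral_zero_ae <|
    ((ae_restrict_iff' measurableSet_Icc).1 hq0).mono fun t ht hmem =>
      ht (by rw [uIoc_of_le hT'] at hmem; exact Ioc_subset_Icc_self hmem)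
  exact ⟨hJ0, by linarith, hq0⟩

/-- **No free roundtrips.** Assume `λ_{0−} ≤ λ_0`, `2β_t + γ̇_t > 0` on
`[0,T]`, and initial impact state `y = 0`. If a trading path satisfies the roundtrip
constraint `J_0 + ∫₀ᵀ q_t dt + J_T = 0` and its total execution cost vanishes, then
`J_0 = 0`, `J_T = 0`, and `q_t = 0` for Lebesgue-a.e. `t ∈ [0,T]`. -/
theorem no_free_roundtrips
    (T : ℝ) (hT : 0 < T) (lam0m y : ℝ) (hlam0m : 0 < lam0m)
    (beta lam lam' eps : ℝ → ℝ)
    (hbeta_meas : Measurable beta) (heps_meas : Measurable eps)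
    (hbeta_pos : ∀ t ∈ Icc (0:ℝ) T, 0 < beta t)
    (hbeta_bdd : ∃ M, ∀ t ∈ Icc (0:ℝ) T, |beta t| ≤ M)
    (heps_lb : ∃ c, 0 < c ∧ ∀ t ∈ Icc (0:ℝ) T, c ≤ eps t)
    (heps_ub : ∃ M, ∀ t ∈ Icc (0:ℝ) T, eps t ≤ M)
    (hlam_lb : ∃ c, 0 < c ∧ ∀ t ∈ Icc (0:ℝ) T, c ≤ lam t)
    (hlam_ub : ∃ M, ∀ t ∈ Icc (0:ℝ) T, lam t ≤ M)
    (hlam_deriv : ∀ t, HasDerivAt lam (lam' t) t)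
    (hlam'_bdd : ∃ M, ∀ t, |lam' t| ≤ M)
    (J0 JT : ℝ) (q : ℝ → ℝ) (hq_meas : Measurable q)
    (hq_sq : IntegrableOn (fun t => q t ^ 2) (Icc (0:ℝ) T))
    (Y : ℝ → ℝ) (hY0 : Y 0 = y + lam0m * J0)
    (hY : ∀ t ∈ Icc (0:ℝ) T,
        Y t = Y 0 + ∫ s in (0:ℝ)..t, (-beta s * Y s + lam s * q s))
    (hle : lam0m ≤ lam 0)
    (hnoarb : ∀ t ∈ Icc (0:ℝ) T, 0 < 2 * beta t + lam' t / lam t)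
    (hy : y = 0)
    (hconstraint : J0 + (∫ t in (0:ℝ)..T, q t) + JT = 0)
    (hcost : (1/2) * (y + Y 0) * J0 + (∫ t in (0:ℝ)..T, Y t * q t)
      + (1/2) * (Y T + (Y T + lam T * JT)) * JT
      + (1/2) * (∫ t in (0:ℝ)..T, eps t * q t ^ 2) = 0) :
    J0 = 0 ∧ JT = 0 ∧ ∀ᵐ t ∂(volume.restrict (Icc (0:ℝ) T)), q t = 0 :=
  no_free_roundtrips_general T hT lam0m y hlam0m beta lam lam' eps hbeta_meas heps_meas hbeta_bdd
    heps_lb heps_ub hlam_lb hlam_deriv hlam'_bdd J0 JT q hq_meas hq_sq Y hY0 hY hle hnoarb hy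
    hconstraint hcost
end
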